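/- For any natural number m, any natural number M with 2^m ≤ M < 2^{m+1}, and any real coefficients a_{2^m}, ..., a_{2^{m+1}-1}, the L^1 norm of the partial sum satisfies ∫_0^1 |∑_{k=2^m}^{M} a_k W_k(x)| dx ≤ (∫_0^1 |∑_{k=2^m}^{2^{m+1}-1} a_k W_k(x)|^2 dx)^{1/2}. -/

import Mathlib

open MeasureTheory Finset Filter

noncomputable def rademacher (n : ℕ) (x : ℝ) : ℝ :=
  if 1 ≤ x then -1 else (-1 : ℝ) ^ ⌊(2 : ℝ) ^ n * x⌋

noncomputable def walsh (n : ℕ) (x : ℝ) : ℝ :=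
  ∏ i ∈ Finset.range (n + 1), if n.testBit i then rademacher (i + 1) x else 1

/-!
The Walsh functions are orthonormal on `[0, 1]`. The product of two of them is the Walsh function
indexed by the XOR of the indices, and `walsh n` with `n ≠ 0` has integral zero: if `L` is the top
bit of `n`, then `walsh n` is constant on the dyadic intervals of length `2⁻⁽ᴸ⁺¹⁾` and takes
opposite values on the two halves of each dyadic interval of length `2⁻ᴸ`. By Parseval, the
squared `L²` norm of a Walsh polynomial is the sum of its squared coefficients, which can only grow
when `[2 ^ m, M]` is completed to the whole block `[2 ^ m, 2 ^ (m + 1))`; and on the probability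
space `[0, 1]` the `L¹` norm is at most the `L²` norm.
-/

lemma integral_zero_one_eq_sum_div_of_eqOn {f : ℝ → ℝ} {K : ℕ} (hK : 0 < K) (c : ℕ → ℝ)
    (hf : ∀ j < K, Set.EqOn f (fun _ ↦ c j) (Set.Ioo ((j : ℝ) / K) ((j + 1) / K))) :
    ∫ x in (0 : ℝ)..1, f x = (∑ j ∈ range K, c j) / K := by
  have hK' : (0 : ℝ) < K := Nat.cast_pos.2 hK
  have hpiece :
      ∀ j < K, Set.EqOn f (fun _ ↦ c j) (Set.uIoo ((j : ℝ) / K) (((j + 1 : ℕ) : ℝ) / K)) := by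
    intro j hj
    rw [Set.uIoo_of_le (by gcongr; simp), Nat.cast_succ]
    exact hf j hj
  have hsum := intervalIntegral.sum_integral_adjacent_intervals (μ := volume)
    (a := fun j : ℕ ↦ (j : ℝ) / K) fun j hj ↦ intervalIntegrable_const.congr_uIoo (hpiece j hj).symm
  rw [Nat.cast_zero, zero_div, div_self hK'.ne'] at hsum
  rw [← hsum, sum_div]
  refine sum_congr rfl fun j hj ↦ ?_
  rw [intervalIntegral.integral_congr_uIoo (hpiece j (mem_range.1 hj)),
    intervalIntegral.integral_const, smul_eq_mul]
  push_cast
  field_simp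
  ring

lemma integral_sq_sum_of_orthonormal {α ι : Type*} [MeasurableSpace α] [DecidableEq ι]
    {μ : Measure α} {φ : ι → α → ℝ} (hint : ∀ j k, Integrable (fun x ↦ φ j x * φ k x) μ)
    (horth : ∀ j k, ∫ x, φ j x * φ k x ∂μ = if j = k then 1 else 0) (s : Finset ι) (c : ι → ℝ) :
    ∫ x, (∑ k ∈ s, c k * φ k x) ^ 2 ∂μ = ∑ k ∈ s, c k ^ 2 := by
  have hexpand : ∀ x, (∑ k ∈ s, c k * φ k x) ^ 2
      = ∑ j ∈ s, ∑ k ∈ s, c j * c k * (φ j x * φ k x) := fun x ↦ by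
    rw [sq, sum_mul_sum]
    exact sum_congr rfl fun j _ ↦ sum_congr rfl fun k _ ↦ by ring
  simp_rw [hexpand]
  rw [integral_finsetSum _ fun j _ ↦ integrable_finsetSum _ fun k _ ↦ (hint j k).const_mul _]
  simp_rw [integral_finsetSum _ fun k _ ↦ (hint _ k).const_mul _, integral_const_mul, horth]
  simp [sq]

lemma integral_abs_le_sqrt_integral_sq {α : Type*} [MeasurableSpace α] {μ : Measure α}
    [IsProbabilityMeasure μ] {f : α → ℝ} (hf : MemLp f 2 μ) :
    ∫ x, |f x| ∂μ ≤ √(∫ x, f x ^ 2 ∂μ) := by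
  have hvar := ProbabilityTheory.variance_nonneg |f| μ
  rw [ProbabilityTheory.variance_eq_sub hf.abs] at hvar
  refine Real.le_sqrt_of_sq_le ?_
  simpa [sq_abs] using hvar

lemma rademacher_mul_self (n : ℕ) (x : ℝ) : rademacher n x * rademacher n x = 1 := by
  unfold rademacher
  split_ifs
  · norm_num
  · rw [← mul_zpow]; norm_num

lemma measurable_rademacher (n : ℕ) : Measurable (rademacher n) :=
  Measurable.ite (measurableSet_le measurable_const measurable_id) measurable_const
    (measurable_from_top.comp (Int.measurable_floor.comp (measurable_const_mul _)))

lemma floor_two_pow_mul_of_mem_Ico {N j : ℕ} {x : ℝ}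
    (hx : x ∈ Set.Ico ((j : ℝ) / 2 ^ N) ((j + 1) / 2 ^ N)) {i : ℕ} (hi : i ≤ N) :
    ⌊(2 : ℝ) ^ i * x⌋ = ((j / 2 ^ (N - i) : ℕ) : ℤ) := by
  have hN : ⌊(2 : ℝ) ^ N * x⌋ = j := by
    rw [Int.floor_eq_iff]
    have h2N : (0 : ℝ) < 2 ^ N := by positivity
    constructor
    · have := (div_le_iff₀ h2N).1 hx.1; push_cast; linarith
    · have := (lt_div_iff₀ h2N).1 hx.2; push_cast; linarith
  have hsplit : (2 : ℝ) ^ i * x = 2 ^ N * x / ((2 ^ (N - i) : ℕ) : ℝ) := by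
    rw [eq_div_iff (by positivity), Nat.cast_pow, Nat.cast_ofNat, mul_right_comm, ← pow_add,
      Nat.add_sub_cancel' hi]
  rw [hsplit, Int.floor_div_natCast, hN]
  norm_cast

-- On `[j / 2 ^ N, (j + 1) / 2 ^ N)`, the `(i + 1)`-st binary digit of `x` is bit `N - (i + 1)`
-- of `j`.
lemma rademacher_succ_of_mem_Ico {N j : ℕ} (hj : j < 2 ^ N) {x : ℝ}
    (hx : x ∈ Set.Ico ((j : ℝ) / 2 ^ N) ((j + 1) / 2 ^ N)) {i : ℕ} (hi : i < N) :
    rademacher (i + 1) x = if j.testBit (N - (i + 1)) then -1 else 1 := by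
  have hx1 : ¬ 1 ≤ x := by
    refine not_le.2 (hx.2.trans_le ?_)
    rw [div_le_one (by positivity)]
    exact_mod_cast hj
  rw [rademacher, if_neg hx1, floor_two_pow_mul_of_mem_Ico hx hi, zpow_natCast,
    neg_one_pow_eq_ite, Nat.testBit_eq_decide_div_mod_eq]
  rcases Nat.mod_two_eq_zero_or_one (j / 2 ^ (N - (i + 1))) with h | h <;> simp [Nat.even_iff, h]

lemma walsh_eq_prod_range {n N : ℕ} (hn : n < 2 ^ N) (x : ℝ) :
    walsh n x = ∏ i ∈ range N, if n.testBit i then rademacher (i + 1) x else 1 := by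
  have hbit : ∀ i, n < 2 ^ i → (if n.testBit i then rademacher (i + 1) x else 1) = 1 :=
    fun i hi ↦ by rw [Nat.testBit_lt_two_pow hi, if_neg Bool.false_ne_true]
  rcases le_total (n + 1) N with h | h
  · refine prod_subset (range_subset_range.2 h) fun i _ hi ↦ hbit i ?_
    rw [mem_range, not_lt] at hi
    exact Nat.lt_two_pow_self.trans_le (Nat.pow_le_pow_right two_pos (by omega))
  · refine (prod_subset (range_subset_range.2 h) fun i _ hi ↦ hbit i ?_).symm
    exact hn.trans_le (Nat.pow_le_pow_right two_pos (by simpa using hi))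

@[simp]
lemma walsh_zero (x : ℝ) : walsh 0 x = 1 := by simp [walsh]

lemma walsh_mul_walsh (j k : ℕ) (x : ℝ) : walsh j x * walsh k x = walsh (j ^^^ k) x := by
  have hlt : ∀ i ≤ j + k, i < 2 ^ (j + k) := fun i hi ↦
    Nat.lt_two_pow_self.trans_le (Nat.pow_le_pow_right two_pos hi)
  have hj := hlt j (Nat.le_add_right j k)
  have hk := hlt k (Nat.le_add_left k j)
  rw [walsh_eq_prod_range hj, walsh_eq_prod_range hk,
    walsh_eq_prod_range (Nat.xor_lt_two_pow hj hk), ← prod_mul_distrib]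
  refine prod_congr rfl fun i _ ↦ ?_
  rw [Nat.testBit_xor]
  cases j.testBit i <;> cases k.testBit i <;> simp [rademacher_mul_self]

lemma abs_walsh (n : ℕ) (x : ℝ) : |walsh n x| = 1 := by
  have h : walsh n x * walsh n x = 1 := by rw [walsh_mul_walsh, Nat.xor_self, walsh_zero]
  rcases mul_self_eq_one_iff.1 h with h | h <;> simp [h]

lemma measurable_walsh (n : ℕ) : Measurable (walsh n) :=
  Finset.measurable_prod _ fun i _ ↦ by
    split_ifs
    exacts [measurable_rademacher _, measurable_const]

lemma memLp_walsh {μ : Measure ℝ} [IsFiniteMeasure μ] (n : ℕ) (p : ENNReal) : MemLp (walsh n) p μ :=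
  MemLp.of_bound (measurable_walsh n).aestronglyMeasurable 1 (by simp [abs_walsh])

def walshDyadicValue (n N j : ℕ) : ℝ :=
  ∏ i ∈ range N, if n.testBit i && j.testBit (N - (i + 1)) then -1 else 1

lemma walsh_eq_walshDyadicValue {n N j : ℕ} (hn : n < 2 ^ N) (hj : j < 2 ^ N) {x : ℝ}
    (hx : x ∈ Set.Ico ((j : ℝ) / 2 ^ N) ((j + 1) / 2 ^ N)) :
    walsh n x = walshDyadicValue n N j := by
  rw [walsh_eq_prod_range hn]
  refine prod_congr rfl fun i hi ↦ ?_
  rw [rademacher_succ_of_mem_Ico hj hx (mem_range.1 hi)]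
  cases n.testBit i <;> simp

lemma walshDyadicValue_xor_one {n L : ℕ} (hL : n.testBit L) (j : ℕ) :
    walshDyadicValue n (L + 1) (j ^^^ 1) = -walshDyadicValue n (L + 1) j := by
  have hbit : ∀ k, (j ^^^ 1).testBit k = (j.testBit k ^^ decide (0 = k)) := fun k ↦ by
    rw [Nat.testBit_xor, ← pow_zero 2, Nat.testBit_two_pow]
  have hlow : ∀ i ∈ range L, (if n.testBit i && (j ^^^ 1).testBit (L + 1 - (i + 1)) then -1 else 1)
      = (if n.testBit i && j.testBit (L + 1 - (i + 1)) then (-1 : ℝ) else 1) := fun i hi ↦ by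
    have : 0 ≠ L - i := by rw [mem_range] at hi; omega
    simp [hbit, this]
  rw [walshDyadicValue, prod_range_succ, prod_congr rfl hlow, walshDyadicValue, prod_range_succ]
  simp only [hL, Nat.sub_self, hbit]
  cases j.testBit 0 <;> simp

lemma sum_walshDyadicValue_eq_zero {n L : ℕ} (hL : n.testBit L) :
    ∑ j ∈ range (2 ^ (L + 1)), walshDyadicValue n (L + 1) j = 0 := by
  refine sum_involution (fun j _ ↦ j ^^^ 1) (fun j _ ↦ by rw [walshDyadicValue_xor_one hL]; ring)
    (fun j _ _ h ↦ ?_) (fun j hj ↦ ?_) (fun j _ ↦ by rw [Nat.xor_assoc, Nat.xor_self, Nat.xor_zero])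
  · simpa using congrArg (· ^^^ j) h
  · exact mem_range.2 (Nat.xor_lt_two_pow (mem_range.1 hj) (Nat.one_lt_two_pow (by omega)))

lemma integral_walsh {n : ℕ} (hn : n ≠ 0) : ∫ x in (0 : ℝ)..1, walsh n x = 0 := by
  set N := n.log2 + 1
  have hK : 0 < 2 ^ N := Nat.two_pow_pos N
  rw [integral_zero_one_eq_sum_div_of_eqOn hK (walshDyadicValue n N), sum_walshDyadicValue_eq_zero
    (Nat.testBit_log2 hn), zero_div]
  intro j hj x hx
  push_cast at hx
  exact walsh_eq_walshDyadicValue Nat.lt_log2_self hj (Set.Ioo_subset_Ico_self hx)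

lemma integral_walsh_mul_walsh (j k : ℕ) :
    ∫ x in (0 : ℝ)..1, walsh j x * walsh k x = if j = k then 1 else 0 := by
  simp_rw [walsh_mul_walsh]
  split_ifs with h
  · simp [h]
  · exact integral_walsh fun h0 ↦ h (Nat.eq_of_xor_eq_zero h0)

instance : IsProbabilityMeasure (volume.restrict (Set.Ioc (0 : ℝ) 1)) := ⟨by simp⟩

lemma integral_sq_sum_walsh (s : Finset ℕ) (c : ℕ → ℝ) :
    ∫ x in Set.Ioc (0 : ℝ) 1, (∑ k ∈ s, c k * walsh k x) ^ 2 = ∑ k ∈ s, c k ^ 2 := by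
  refine integral_sq_sum_of_orthonormal (fun j k ↦ ?_) (fun j k ↦ ?_) s c
  · simpa only [walsh_mul_walsh] using (memLp_walsh (j ^^^ k) 1).integrable le_rfl
  · rw [← intervalIntegral.integral_of_le zero_le_one, integral_walsh_mul_walsh]

theorem walsh_partial_block_L1_le_L2_general (m M : ℕ) (h2 : M < 2 ^ (m + 1))
    (a : ℕ → ℝ) :
    (∫ x in (0 : ℝ)..1, |∑ k ∈ Finset.Icc (2 ^ m) M, a k * walsh k x|) ≤
      (∫ x in (0 : ℝ)..1,
        (∑ k ∈ Finset.Ico (2 ^ m) (2 ^ (m + 1)), a k * walsh k x) ^ 2) ^ ((1 : ℝ) / 2) := by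
  have hsub : Icc (2 ^ m) M ⊆ Ico (2 ^ m) (2 ^ (m + 1)) := fun k hk ↦ by
    simp only [Finset.mem_Icc, Finset.mem_Ico] at hk ⊢
    omega
  have hmemLp : MemLp (fun x ↦ ∑ k ∈ Icc (2 ^ m) M, a k * walsh k x) 2
      (volume.restrict (Set.Ioc (0 : ℝ) 1)) :=
    memLp_finsetSum _ fun k _ ↦ (memLp_walsh k 2).const_mul (a k)
  simp only [intervalIntegral.integral_of_le zero_le_one, ← Real.sqrt_eq_rpow,
    integral_sq_sum_walsh]
  calc ∫ x in Set.Ioc 0 1, |∑ k ∈ Icc (2 ^ m) M, a k * walsh k x|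
      ≤ √(∫ x in Set.Ioc 0 1, (∑ k ∈ Icc (2 ^ m) M, a k * walsh k x) ^ 2) :=
        integral_abs_le_sqrt_integral_sq hmemLp
    _ = √(∑ k ∈ Icc (2 ^ m) M, a k ^ 2) := by rw [integral_sq_sum_walsh]
    _ ≤ √(∑ k ∈ Ico (2 ^ m) (2 ^ (m + 1)), a k ^ 2) :=
        Real.sqrt_le_sqrt (sum_le_sum_of_subset_of_nonneg hsub fun _ _ _ ↦ sq_nonneg _)

theorem walsh_partial_block_L1_le_L2 (m M : ℕ) (h1 : 2 ^ m ≤ M) (h2 : M < 2 ^ (m + 1))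
    (a : ℕ → ℝ) :
    (∫ x in (0 : ℝ)..1, |∑ k ∈ Finset.Icc (2 ^ m) M, a k * walsh k x|) ≤
      (∫ x in (0 : ℝ)..1,
        (∑ k ∈ Finset.Ico (2 ^ m) (2 ^ (m + 1)), a k * walsh k x) ^ 2) ^ ((1 : ℝ) / 2) :=
  walsh_partial_block_L1_le_L2_general m M h2 a
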